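/- Let α ∈ {0,+,−,*}ⁿ be a symbol sequence with at least two entries equal to * and suppose α has an isolated * at position i (i.e. αᵢ = * but α_{i−1} ≠ * and α_{i+1} ≠ *, treating out-of-range positions as non-*). Let F = conv{e_b − e_a : a,b ∈ {j : α_j = *}, a ≠ b} ⊆ ℝⁿ. Then there is no Bruhat interval [u,v] in Symₙ with v minimal in its coset (2,…,n−1 ascending in one-line notation) such that F equals conv{π(φ(x)) : x ∈ [u,v]}, where φ(x) = (x(1),…,x(n)) and π sends a permutation-vector p to the vector with −1 at the position where p equals 1, +1 at the position where p equals n, and 0 elsewhere. -/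

import Mathlib

/-- The symbols `0, +, −, *` of a hollow symbol sequence. -/
inductive HollowSymbol
  | zero
  | plus
  | minus
  | star
deriving DecidableEq

open HollowSymbol

/-- The number of inversions of a permutation of `Fin n` (its Coxeter length). -/
def invCount {n : ℕ} (σ : Equiv.Perm (Fin n)) : ℕ :=
  (Finset.univ.filter fun p : Fin n × Fin n => p.1 < p.2 ∧ σ p.2 < σ p.1).card

/-- The (strong) Bruhat order on the symmetric group `Symₙ`. -/
def BruhatLE {n : ℕ} (u v : Equiv.Perm (Fin n)) : Prop :=
  Relation.ReflTransGen
    (fun a b => invCount a < invCount b ∧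
      ∃ i j : Fin n, i ≠ j ∧ b = a * Equiv.swap i j) u v

/-- `v` is a minimal coset representative of hollow rank: the values `2,…,n−1`
appear in ascending order in the one-line notation of `v`.  (In 0-based values on
`Fin n`, the values different from `0` and `n−1` appear in ascending positions.) -/
def IsHollowMinRep {n : ℕ} (v : Equiv.Perm (Fin n)) : Prop :=
  ∀ a b : Fin n, a < b → (a : ℕ) ≠ 0 → (b : ℕ) ≠ n - 1 → v⁻¹ a < v⁻¹ b

/-- The vertex map `π ∘ φ` of the hollow flag variety: it sends `x ∈ Symₙ` to the
vector with `−1` in coordinate `x⁻¹(1)`, `+1` in coordinate `x⁻¹(n)` and `0`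
elsewhere. -/
def hollowVec {n : ℕ} (x : Equiv.Perm (Fin n)) : Fin n → ℝ :=
  fun p => (if (x p : ℕ) = n - 1 then 1 else 0) - (if (x p : ℕ) = 0 then 1 else 0)


namespace Stmt7Aux

open Finset

variable {n : ℕ}

/-- rank count: number of positions `p < c` with value `≤ r`. -/
def NN (x : Equiv.Perm (Fin n)) (r c : ℕ) : ℕ :=
  (Finset.univ.filter fun p : Fin n => (p : ℕ) < c ∧ ((x p : ℕ) ≤ r)).card

/-- dual count: number of positions `p ≥ c` with value `≥ r`. -/
def DD (x : Equiv.Perm (Fin n)) (r c : ℕ) : ℕ :=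
  (Finset.univ.filter fun p : Fin n => c ≤ (p : ℕ) ∧ (r ≤ (x p : ℕ))).card

lemma NN_succ (x : Equiv.Perm (Fin n)) (r c : ℕ) (hc : c < n) :
    NN x r (c+1) = NN x r c + (if ((x ⟨c, hc⟩ : Fin n) : ℕ) ≤ r then 1 else 0) := by
  classical
  unfold NN
  have hsplit : (Finset.univ.filter fun p : Fin n => (p : ℕ) < c + 1 ∧ ((x p : ℕ) ≤ r))
      = (Finset.univ.filter fun p : Fin n => (p : ℕ) < c ∧ ((x p : ℕ) ≤ r)) ∪
        (Finset.univ.filter fun p : Fin n => p = ⟨c, hc⟩ ∧ ((x p : ℕ) ≤ r)) := by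
    ext p
    simp only [Finset.mem_filter, Finset.mem_univ, true_and, Finset.mem_union, Fin.ext_iff,
      Fin.val_mk]
    constructor
    · rintro ⟨h1, h2⟩
      rcases Nat.lt_or_ge (p : ℕ) c with h | h
      · exact Or.inl ⟨h, h2⟩
      · exact Or.inr ⟨by omega, h2⟩
    · rintro (⟨h1, h2⟩ | ⟨h1, h2⟩)
      · exact ⟨by omega, h2⟩
      · exact ⟨by omega, h2⟩
  rw [hsplit, Finset.card_union_of_disjoint]
  · congr 1
    have : (Finset.univ.filter fun p : Fin n => p = ⟨c, hc⟩ ∧ ((x p : ℕ) ≤ r))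
        = if ((x ⟨c, hc⟩ : Fin n) : ℕ) ≤ r then {(⟨c, hc⟩ : Fin n)} else ∅ := by
      split_ifs with hv
      · ext p
        simp only [Finset.mem_filter, Finset.mem_univ, true_and, Finset.mem_singleton]
        constructor
        · rintro ⟨rfl, _⟩; rfl
        · rintro rfl; exact ⟨rfl, hv⟩
      · ext p
        simp only [Finset.mem_filter, Finset.mem_univ, true_and, Finset.notMem_empty,
          iff_false, not_and]
        rintro rfl; exact hv
    rw [this]
    split_ifs <;> simp
  · simp only [Finset.disjoint_left, Finset.mem_filter, Finset.mem_univ, true_and]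
    rintro p ⟨h1, _⟩ ⟨rfl, _⟩
    simp only [Fin.val_mk] at h1
    omega

lemma DD_succ (x : Equiv.Perm (Fin n)) (r c : ℕ) (hc : c < n) :
    DD x r c = DD x r (c+1) + (if r ≤ ((x ⟨c, hc⟩ : Fin n) : ℕ) then 1 else 0) := by
  classical
  unfold DD
  have hsplit : (Finset.univ.filter fun p : Fin n => c ≤ (p : ℕ) ∧ (r ≤ (x p : ℕ)))
      = (Finset.univ.filter fun p : Fin n => c + 1 ≤ (p : ℕ) ∧ (r ≤ (x p : ℕ))) ∪
        (Finset.univ.filter fun p : Fin n => p = ⟨c, hc⟩ ∧ (r ≤ (x p : ℕ))) := by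
    ext p
    simp only [Finset.mem_filter, Finset.mem_univ, true_and, Finset.mem_union, Fin.ext_iff,
      Fin.val_mk]
    constructor
    · rintro ⟨h1, h2⟩
      rcases Nat.lt_or_ge c (p : ℕ) with h | h
      · exact Or.inl ⟨by omega, h2⟩
      · exact Or.inr ⟨by omega, h2⟩
    · rintro (⟨h1, h2⟩ | ⟨h1, h2⟩)
      · exact ⟨by omega, h2⟩
      · exact ⟨by omega, h2⟩
  rw [hsplit, Finset.card_union_of_disjoint]
  · congr 1
    have : (Finset.univ.filter fun p : Fin n => p = ⟨c, hc⟩ ∧ (r ≤ (x p : ℕ)))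
        = if r ≤ ((x ⟨c, hc⟩ : Fin n) : ℕ) then {(⟨c, hc⟩ : Fin n)} else ∅ := by
      split_ifs with hv
      · ext p
        simp only [Finset.mem_filter, Finset.mem_univ, true_and, Finset.mem_singleton]
        constructor
        · rintro ⟨rfl, _⟩; rfl
        · rintro rfl; exact ⟨rfl, hv⟩
      · ext p
        simp only [Finset.mem_filter, Finset.mem_univ, true_and, Finset.notMem_empty,
          iff_false, not_and]
        rintro rfl; exact hv
    rw [this]
    split_ifs <;> simp
  · simp only [Finset.disjoint_left, Finset.mem_filter, Finset.mem_univ, true_and]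
    rintro p ⟨h1, _⟩ ⟨rfl, _⟩
    simp only [Fin.val_mk] at h1
    omega

lemma invCount_lt_swap (x : Equiv.Perm (Fin n)) {j k : Fin n} (hjk : j < k) (hv : x j < x k) :
    invCount x < invCount (x * Equiv.swap j k) := by
  classical
  set s : Equiv.Perm (Fin n) := Equiv.swap j k with hs
  have hys : ∀ p, (x * s) p = x (s p) := fun p => rfl
  set I1 : Finset (Fin n × Fin n) :=
    Finset.univ.filter (fun p : Fin n × Fin n => p.1 < p.2 ∧ x p.2 < x p.1) with hI1
  set I2 : Finset (Fin n × Fin n) :=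
    Finset.univ.filter (fun p : Fin n × Fin n => p.1 < p.2 ∧ (x * s) p.2 < (x * s) p.1) with hI2
  have hjne : j ≠ k := ne_of_lt hjk
  have hsj : s j = k := Equiv.swap_apply_left j k
  have hsk : s k = j := Equiv.swap_apply_right j k
  have hss : ∀ p, s (s p) = p := fun p => Equiv.swap_apply_self j k p
  have hsother : ∀ p, p ≠ j → p ≠ k → s p = p := fun p h1 h2 =>
    Equiv.swap_apply_of_ne_of_ne h1 h2
  set ι : Fin n × Fin n → Fin n × Fin n := fun pq =>
    if (j < pq.1 ∧ pq.1 < k) ∨ (j < pq.2 ∧ pq.2 < k) then pq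
    else if s pq.1 < s pq.2 then (s pq.1, s pq.2) else (s pq.2, s pq.1) with hι
  have hmid_s : ∀ p : Fin n, ¬(j < p ∧ p < k) → ¬(j < s p ∧ s p < k) := by
    intro p hp
    rcases eq_or_ne p j with heq | hpj
    · rw [heq, hsj]; omega
    rcases eq_or_ne p k with heq | hpk
    · rw [heq, hsk]; omega
    · rwa [hsother p hpj hpk]
  have hinvol : ∀ pq : Fin n × Fin n, pq.1 < pq.2 → ι (ι pq) = pq := by
    rintro ⟨p, q⟩ h
    simp only at h
    simp only [hι]
    by_cases hm : (j < p ∧ p < k) ∨ (j < q ∧ q < k)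
    · simp only [if_pos hm]
    · rw [if_neg hm]
      have hmp : ¬(j < p ∧ p < k) := fun hc => hm (Or.inl hc)
      have hmq : ¬(j < q ∧ q < k) := fun hc => hm (Or.inr hc)
      have hm1 := hmid_s p hmp
      have hm2 := hmid_s q hmq
      by_cases hso : s p < s q
      · rw [if_pos hso]
        simp only
        have hc : ¬((j < s p ∧ s p < k) ∨ (j < s q ∧ s q < k)) := by tauto
        rw [if_neg hc]
        simp only [hss]
        rw [if_pos h]
      · rw [if_neg hso]
        simp only
        have hc : ¬((j < s q ∧ s q < k) ∨ (j < s p ∧ s p < k)) := by tauto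
        rw [if_neg hc]
        simp only [hss]
        have hqp : ¬ (q < p) := not_lt_of_gt h
        rw [if_neg hqp]
  have hjk_mem : (j, k) ∈ I2 := by
    simp only [hI2, Finset.mem_filter, Finset.mem_univ, true_and]
    exact ⟨hjk, by simp only [hys, hsj, hsk]; exact hv⟩
  have hmap : ∀ pq ∈ I1, ι pq ∈ I2.erase (j, k) := by
    rintro ⟨p, q⟩ hpq
    rw [hI1, Finset.mem_filter] at hpq
    obtain ⟨-, h1, h2⟩ := hpq
    simp only at h1 h2
    have hne_jk : ¬(p = j ∧ q = k) := by
      rintro ⟨e1, e2⟩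
      rw [e1, e2] at h2
      exact absurd hv (not_lt_of_gt h2)
    simp only [hι]
    by_cases hm : (j < p ∧ p < k) ∨ (j < q ∧ q < k)
    · rw [if_pos hm]
      rw [Finset.mem_erase]
      refine ⟨by rintro hcon; rw [Prod.mk.injEq] at hcon; omega, ?_⟩
      simp only [hI2, Finset.mem_filter, Finset.mem_univ, true_and]
      refine ⟨h1, ?_⟩
      simp only [hys]
      rcases eq_or_ne p j with heq | hpj
      · rw [heq, hsj, hsother q (by omega) (by omega)]
        exact lt_trans (heq ▸ h2) hv
      rcases eq_or_ne q k with heq | hqk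
      · rw [heq, hsk, hsother p hpj (by omega)]
        exact lt_trans hv (heq ▸ h2)
      have hpk : p ≠ k := by omega
      have hqj : q ≠ j := by omega
      rw [hsother p hpj hpk, hsother q hqj hqk]
      exact h2
    · rw [if_neg hm]
      have hso : s p < s q := by
        rcases eq_or_ne p j with heq | hpj
        · rw [heq, hsj, hsother q (by omega) (by omega)]
          omega
        rcases eq_or_ne p k with heq | hpk
        · rw [heq, hsk, hsother q (by omega) (by omega)]
          omega
        rcases eq_or_ne q j with heq | hqj
        · rw [heq, hsj, hsother p hpj hpk]
          omega
        rcases eq_or_ne q k with heq | hqk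
        · rw [heq, hsk, hsother p hpj hpk]
          omega
        · rw [hsother p hpj hpk, hsother q hqj hqk]
          exact h1
      rw [if_pos hso]
      rw [Finset.mem_erase]
      constructor
      · rintro hcon
        simp only [Prod.mk.injEq] at hcon
        have e1 : p = k := by rw [← hss p, hcon.1, hsj]
        have e2 : q = j := by rw [← hss q, hcon.2, hsk]
        omega
      simp only [hI2, Finset.mem_filter, Finset.mem_univ, true_and]
      refine ⟨hso, ?_⟩
      simp only [hys, hss]
      exact h2
  have hinj : Set.InjOn ι I1 := by
    intro a ha b hb heq
    have ha2 : a ∈ I1 := Finset.mem_coe.mp ha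
    have hb2 : b ∈ I1 := Finset.mem_coe.mp hb
    rw [hI1, Finset.mem_filter] at ha2 hb2
    have := hinvol a ha2.2.1
    rw [heq, hinvol b hb2.2.1] at this
    exact this.symm
  have hcard : I1.card ≤ (I2.erase (j, k)).card :=
    Finset.card_le_card_of_injOn ι hmap hinj
  have hlt : (I2.erase (j, k)).card < I2.card := Finset.card_erase_lt_of_mem hjk_mem
  show I1.card < I2.card
  omega

lemma swap_step_le (x : Equiv.Perm (Fin n)) {j k : Fin n} (hjk : j < k) (hv : x j < x k) :
    BruhatLE x (x * Equiv.swap j k) :=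
  Relation.ReflTransGen.single
    ⟨invCount_lt_swap x hjk hv, j, k, ne_of_lt hjk, rfl⟩

/-- any Bruhat step can be normalised to an ordered transposition with increasing values -/
lemma step_orient {a b : Equiv.Perm (Fin n)}
    (h : invCount a < invCount b ∧ ∃ i j : Fin n, i ≠ j ∧ b = a * Equiv.swap i j) :
    ∃ j k : Fin n, j < k ∧ a j < a k ∧ b = a * Equiv.swap j k := by
  obtain ⟨hinv, i, j, hne, hb⟩ := h
  rcases lt_or_gt_of_ne hne with hij | hij
  · refine ⟨i, j, hij, ?_, hb⟩
    by_contra hcon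
    push_neg at hcon
    have hne' : a j ≠ a i := fun hc => hne (a.injective hc).symm
    have hlt : a j < a i := lt_of_le_of_ne hcon hne'
    have hbi : b i = a j := by rw [hb]; simp [Equiv.Perm.mul_apply]
    have hbj : b j = a i := by rw [hb]; simp [Equiv.Perm.mul_apply]
    have : invCount b < invCount (b * Equiv.swap i j) := by
      apply invCount_lt_swap b hij
      rw [hbi, hbj]; exact hlt
    rw [hb, mul_assoc, Equiv.swap_mul_self, mul_one] at this
    rw [hb] at hinv
    omega
  · refine ⟨j, i, hij, ?_, by rwa [Equiv.swap_comm]⟩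
    by_contra hcon
    push_neg at hcon
    have hne' : a i ≠ a j := fun hc => hne (a.injective hc)
    have hlt : a i < a j := lt_of_le_of_ne hcon hne'
    have hbi : b i = a j := by rw [hb]; simp [Equiv.Perm.mul_apply]
    have hbj : b j = a i := by rw [hb]; simp [Equiv.Perm.mul_apply]
    have : invCount b < invCount (b * Equiv.swap j i) := by
      apply invCount_lt_swap b hij
      rw [hbi, hbj]; exact hlt
    rw [Equiv.swap_comm, hb, mul_assoc, Equiv.swap_mul_self, mul_one] at this
    rw [hb] at hinv
    omega

lemma NN_swap_le (a : Equiv.Perm (Fin n)) {j k : Fin n} (hjk : j < k) (hv : a j < a k)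
    (r c : ℕ) : NN (a * Equiv.swap j k) r c ≤ NN a r c := by
  classical
  unfold NN
  rcases le_or_gt c (k : ℕ) with hc | hc
  · -- identity injection
    apply Finset.card_le_card
    intro p hp
    rw [Finset.mem_filter] at hp ⊢
    obtain ⟨-, hp1, hp2⟩ := hp
    refine ⟨Finset.mem_univ _, hp1, ?_⟩
    have hpk : p ≠ k := by omega
    rcases eq_or_ne p j with heq | hpj
    · rw [heq]
      have h3 : (a * Equiv.swap j k) p = a k := by
        rw [heq]; simp [Equiv.Perm.mul_apply]
      rw [h3] at hp2
      omega
    · have : (a * Equiv.swap j k) p = a p := by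
        simp [Equiv.Perm.mul_apply, Equiv.swap_apply_of_ne_of_ne hpj hpk]
      rw [this] at hp2
      exact hp2
  · -- swap injection
    apply Finset.card_le_card_of_injOn (fun p => Equiv.swap j k p)
    · intro p hp
      rw [Finset.mem_coe, Finset.mem_filter] at hp ⊢
      beta_reduce
      obtain ⟨-, hp1, hp2⟩ := hp
      refine ⟨Finset.mem_univ _, ?_, ?_⟩
      · rcases eq_or_ne p j with heq | hpj
        · rw [heq, Equiv.swap_apply_left]; omega
        rcases eq_or_ne p k with heq | hpk
        · rw [heq, Equiv.swap_apply_right]; omega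
        · rw [Equiv.swap_apply_of_ne_of_ne hpj hpk]; omega
      · have : a (Equiv.swap j k p) = (a * Equiv.swap j k) p := rfl
        rw [this]
        exact hp2
    · intro p _ q _ hpq
      exact (Equiv.swap j k).injective hpq

lemma DD_swap_le (a : Equiv.Perm (Fin n)) {j k : Fin n} (hjk : j < k) (hv : a j < a k)
    (r c : ℕ) : DD (a * Equiv.swap j k) r c ≤ DD a r c := by
  classical
  unfold DD
  rcases le_or_gt c (j : ℕ) with hc | hc
  · -- swap injection
    apply Finset.card_le_card_of_injOn (fun p => Equiv.swap j k p)
    · intro p hp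
      rw [Finset.mem_coe, Finset.mem_filter] at hp ⊢
      beta_reduce
      obtain ⟨-, hp1, hp2⟩ := hp
      refine ⟨Finset.mem_univ _, ?_, hp2⟩
      rcases eq_or_ne p j with heq | hpj
      · rw [heq, Equiv.swap_apply_left]; omega
      rcases eq_or_ne p k with heq | hpk
      · rw [heq, Equiv.swap_apply_right]; omega
      · rw [Equiv.swap_apply_of_ne_of_ne hpj hpk]; omega
    · intro p _ q _ hpq
      exact (Equiv.swap j k).injective hpq
  · -- identity injection
    apply Finset.card_le_card
    intro p hp
    rw [Finset.mem_filter] at hp ⊢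
    obtain ⟨-, hp1, hp2⟩ := hp
    refine ⟨Finset.mem_univ _, hp1, ?_⟩
    have hpj : p ≠ j := by omega
    rcases eq_or_ne p k with heq | hpk
    · rw [heq]
      have h3 : (a * Equiv.swap j k) p = a j := by
        rw [heq]; simp [Equiv.Perm.mul_apply]
      rw [h3] at hp2
      omega
    · have : (a * Equiv.swap j k) p = a p := by
        simp [Equiv.Perm.mul_apply, Equiv.swap_apply_of_ne_of_ne hpj hpk]
      rw [this] at hp2
      exact hp2

lemma bruhat_NN {x y : Equiv.Perm (Fin n)} (h : BruhatLE x y) (r c : ℕ) :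
    NN y r c ≤ NN x r c := by
  induction h with
  | refl => exact le_refl _
  | tail hstep hlast ih =>
    obtain ⟨j, k, hjk, hv, hb⟩ := step_orient hlast
    calc NN _ r c ≤ NN _ r c := by rw [hb]; exact NN_swap_le _ hjk hv r c
    _ ≤ NN x r c := ih

lemma bruhat_DD {x y : Equiv.Perm (Fin n)} (h : BruhatLE x y) (r c : ℕ) :
    DD y r c ≤ DD x r c := by
  induction h with
  | refl => exact le_refl _
  | tail hstep hlast ih =>
    obtain ⟨j, k, hjk, hv, hb⟩ := step_orient hlast
    calc DD _ r c ≤ DD _ r c := by rw [hb]; exact DD_swap_le _ hjk hv r c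
    _ ≤ DD x r c := ih

lemma NN_split (x : Equiv.Perm (Fin n)) (r c d : ℕ) (hd : d ≤ c) :
    NN x r c = NN x r d +
      (Finset.univ.filter fun p : Fin n => d ≤ (p:ℕ) ∧ (p:ℕ) < c ∧ ((x p:ℕ) ≤ r)).card := by
  classical
  unfold NN
  rw [← Finset.card_union_of_disjoint]
  · congr 1
    ext p
    simp only [Finset.mem_filter, Finset.mem_univ, true_and, Finset.mem_union]
    omega
  · simp only [Finset.disjoint_left, Finset.mem_filter, Finset.mem_univ, true_and]
    rintro p ⟨h1, _⟩ ⟨h2, _, _⟩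
    omega

lemma NN_swap_eq_low (a : Equiv.Perm (Fin n)) {j k : Fin n} (hjk : j < k) {r c : ℕ}
    (hc : c ≤ (j:ℕ)) : NN (a * Equiv.swap j k) r c = NN a r c := by
  classical
  unfold NN
  congr 1
  apply Finset.filter_congr
  intro p _
  by_cases hp : (p:ℕ) < c
  · have hpj : p ≠ j := by omega
    have hpk : p ≠ k := by omega
    have : (a * Equiv.swap j k) p = a p := by
      simp [Equiv.Perm.mul_apply, Equiv.swap_apply_of_ne_of_ne hpj hpk]
    rw [this]
  · simp [hp]

lemma NN_swap_eq_high (a : Equiv.Perm (Fin n)) {j k : Fin n} (hjk : j < k) {r c : ℕ}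
    (hc : (k:ℕ) < c) : NN (a * Equiv.swap j k) r c = NN a r c := by
  classical
  unfold NN
  apply Finset.card_bij' (fun p _ => Equiv.swap j k p) (fun p _ => Equiv.swap j k p)
  · intro p hp
    rw [Finset.mem_filter] at hp ⊢
    obtain ⟨-, hp1, hp2⟩ := hp
    refine ⟨Finset.mem_univ _, ?_, hp2⟩
    rcases eq_or_ne p j with heq | hpj
    · rw [heq, Equiv.swap_apply_left]; omega
    rcases eq_or_ne p k with heq | hpk
    · rw [heq, Equiv.swap_apply_right]; omega
    · rw [Equiv.swap_apply_of_ne_of_ne hpj hpk]; omega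
  · intro p hp
    rw [Finset.mem_filter] at hp ⊢
    obtain ⟨-, hp1, hp2⟩ := hp
    have hval : (a * Equiv.swap j k) (Equiv.swap j k p) = a p := by
      simp [Equiv.Perm.mul_apply, Equiv.swap_apply_self]
    refine ⟨Finset.mem_univ _, ?_, by rw [hval]; exact hp2⟩
    rcases eq_or_ne p j with heq | hpj
    · rw [heq, Equiv.swap_apply_left]; omega
    rcases eq_or_ne p k with heq | hpk
    · rw [heq, Equiv.swap_apply_right]; omega
    · rw [Equiv.swap_apply_of_ne_of_ne hpj hpk]; omega
  · intro p _; exact Equiv.swap_apply_self j k p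
  · intro p _; exact Equiv.swap_apply_self j k p

lemma NN_swap_mid_minus (a : Equiv.Perm (Fin n)) {j k : Fin n} (hjk : j < k) {r c : ℕ}
    (hc1 : (j:ℕ) < c) (hc2 : c ≤ (k:ℕ)) (h1 : (a j:ℕ) ≤ r) (h2 : r < (a k:ℕ)) :
    NN (a * Equiv.swap j k) r c + 1 = NN a r c := by
  classical
  have hset : (Finset.univ.filter fun p : Fin n => (p:ℕ) < c ∧ (((a * Equiv.swap j k) p :ℕ) ≤ r))
      = (Finset.univ.filter fun p : Fin n => (p:ℕ) < c ∧ ((a p:ℕ) ≤ r)).erase j := by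
    ext p
    simp only [Finset.mem_filter, Finset.mem_univ, true_and, Finset.mem_erase]
    constructor
    · rintro ⟨hp1, hp2⟩
      have hpk : p ≠ k := by omega
      rcases eq_or_ne p j with heq | hpj
      · exfalso
        rw [heq] at hp2
        have he : (a * Equiv.swap j k) j = a k := by simp [Equiv.Perm.mul_apply]
        rw [he] at hp2
        omega
      · have he : (a * Equiv.swap j k) p = a p := by
          simp [Equiv.Perm.mul_apply, Equiv.swap_apply_of_ne_of_ne hpj hpk]
        rw [he] at hp2
        exact ⟨hpj, hp1, hp2⟩
    · rintro ⟨hpj, hp1, hp2⟩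
      have hpk : p ≠ k := by omega
      have he : (a * Equiv.swap j k) p = a p := by
        simp [Equiv.Perm.mul_apply, Equiv.swap_apply_of_ne_of_ne hpj hpk]
      exact ⟨hp1, by rw [he]; exact hp2⟩
  unfold NN
  rw [hset, Finset.card_erase_of_mem]
  · have hmem : j ∈ Finset.univ.filter (fun p : Fin n => (p:ℕ) < c ∧ ((a p:ℕ) ≤ r)) := by
      simp only [Finset.mem_filter, Finset.mem_univ, true_and]; exact ⟨hc1, h1⟩
    have := Finset.card_pos.mpr ⟨j, hmem⟩
    omega
  · simp only [Finset.mem_filter, Finset.mem_univ, true_and]; exact ⟨hc1, h1⟩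

lemma NN_swap_mid_plus (a : Equiv.Perm (Fin n)) {j k : Fin n} (hjk : j < k) {r c : ℕ}
    (hc1 : (j:ℕ) < c) (hc2 : c ≤ (k:ℕ)) (h1 : (a k:ℕ) ≤ r) (h2 : r < (a j:ℕ)) :
    NN (a * Equiv.swap j k) r c = NN a r c + 1 := by
  classical
  have hset : (Finset.univ.filter fun p : Fin n => (p:ℕ) < c ∧ (((a * Equiv.swap j k) p :ℕ) ≤ r))
      = insert j (Finset.univ.filter fun p : Fin n => (p:ℕ) < c ∧ ((a p:ℕ) ≤ r)) := by
    ext p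
    simp only [Finset.mem_filter, Finset.mem_univ, true_and, Finset.mem_insert]
    constructor
    · rintro ⟨hp1, hp2⟩
      have hpk : p ≠ k := by omega
      rcases eq_or_ne p j with heq | hpj
      · exact Or.inl heq
      · have he : (a * Equiv.swap j k) p = a p := by
          simp [Equiv.Perm.mul_apply, Equiv.swap_apply_of_ne_of_ne hpj hpk]
        rw [he] at hp2
        exact Or.inr ⟨hp1, hp2⟩
    · rintro (heq | ⟨hp1, hp2⟩)
      · rw [heq]
        have he : (a * Equiv.swap j k) j = a k := by simp [Equiv.Perm.mul_apply]
        rw [he]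
        exact ⟨hc1, h1⟩
      · have hpk : p ≠ k := by omega
        have hpj : p ≠ j := by
          rintro rfl
          omega
        have he : (a * Equiv.swap j k) p = a p := by
          simp [Equiv.Perm.mul_apply, Equiv.swap_apply_of_ne_of_ne hpj hpk]
        rw [he]
        exact ⟨hp1, hp2⟩
  unfold NN
  rw [hset, Finset.card_insert_of_notMem]
  simp only [Finset.mem_filter, Finset.mem_univ, true_and, not_and]
  intro _
  omega

lemma NN_swap_mid_eq (a : Equiv.Perm (Fin n)) {j k : Fin n} (hjk : j < k) {r c : ℕ}
    (hc1 : (j:ℕ) < c) (hc2 : c ≤ (k:ℕ)) (hiff : ((a j:ℕ) ≤ r ↔ (a k:ℕ) ≤ r)) :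
    NN (a * Equiv.swap j k) r c = NN a r c := by
  classical
  unfold NN
  congr 1
  apply Finset.filter_congr
  intro p _
  by_cases hp : (p:ℕ) < c
  · have hpk : p ≠ k := by omega
    rcases eq_or_ne p j with heq | hpj
    · rw [heq]
      have he : (a * Equiv.swap j k) j = a k := by simp [Equiv.Perm.mul_apply]
      rw [he]
      constructor
      · rintro ⟨h3, h4⟩; exact ⟨h3, hiff.mpr h4⟩
      · rintro ⟨h3, h4⟩; exact ⟨h3, hiff.mp h4⟩
    · have he : (a * Equiv.swap j k) p = a p := by
        simp [Equiv.Perm.mul_apply, Equiv.swap_apply_of_ne_of_ne hpj hpk]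
      rw [he]
  · simp [hp]

lemma bruhat_of_NN_aux : ∀ (t : ℕ) (x y : Equiv.Perm (Fin n)),
    (∀ r c, NN y r c ≤ NN x r c) →
    (∑ p ∈ Finset.range n ×ˢ Finset.range (n+2), (NN x p.1 p.2 - NN y p.1 p.2)) < t →
    BruhatLE x y := by
  intro t
  induction t with
  | zero => intro x y _ h; exact absurd h (Nat.not_lt_zero _)
  | succ t ih =>
    intro x y hdom hμ
    by_cases hxy : x = y
    · rw [hxy]
      exact Relation.ReflTransGen.refl
    classical
    have hex : ∃ p, x p ≠ y p := by
      by_contra hc; push_neg at hc; exact hxy (Equiv.ext hc)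
    obtain ⟨p0, hp0⟩ := hex
    set K := Finset.univ.filter (fun p : Fin n => x p ≠ y p) with hK
    have hKne : K.Nonempty := ⟨p0, by simp [hK, hp0]⟩
    set k := K.min' hKne with hk
    have hkK : k ∈ K := Finset.min'_mem _ _
    have hkxy : x k ≠ y k := by
      rw [hK, Finset.mem_filter] at hkK; exact hkK.2
    have hpre : ∀ p : Fin n, p < k → x p = y p := by
      intro p hp
      by_contra hc
      have hple : k ≤ p := by
        apply Finset.min'_le
        simp only [hK, Finset.mem_filter, Finset.mem_univ, true_and]
        exact hc
      omega
    have hpreN : ∀ r, NN x r (k : ℕ) = NN y r (k : ℕ) := by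
      intro r
      unfold NN
      congr 1
      apply Finset.filter_congr
      intro p _
      by_cases hp : (p : ℕ) < (k : ℕ)
      · rw [hpre p (by omega)]
      · simp [hp]
    have hkn : (k:ℕ) < n := k.isLt
    have hmkk : (⟨(k:ℕ), hkn⟩ : Fin n) = k := rfl
    have hxk : x k < y k := by
      have h1 := hdom ((y k : ℕ)) ((k:ℕ)+1)
      rw [NN_succ x _ _ hkn, NN_succ y _ _ hkn, hmkk, hpreN] at h1
      split_ifs at h1 <;> omega
    set L := Finset.univ.filter
      (fun p : Fin n => k < p ∧ x k < x p ∧ (x p : ℕ) ≤ (y k : ℕ)) with hL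
    have hLne : L.Nonempty := by
      refine ⟨x.symm (y k), ?_⟩
      have hxp : x (x.symm (y k)) = y k := Equiv.apply_symm_apply _ _
      simp only [hL, Finset.mem_filter, Finset.mem_univ, true_and]
      have h1 : x.symm (y k) ≠ k := by
        intro hc; rw [hc] at hxp; exact hkxy hxp
      have h2 : ¬ (x.symm (y k) < k) := by
        intro hc
        have h3 := hpre _ hc
        rw [hxp] at h3
        exact h1 (y.injective h3.symm)
      refine ⟨by omega, by rw [hxp]; exact hxk, by rw [hxp]⟩
    set l := L.min' hLne with hl
    have hlL : l ∈ L := Finset.min'_mem _ _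
    rw [hL, Finset.mem_filter] at hlL
    obtain ⟨-, hkl, hxkl, hxly⟩ := hlL
    have hlmin : ∀ p : Fin n, k < p → p < l → ¬(x k < x p ∧ (x p:ℕ) ≤ (y k:ℕ)) := by
      intro p h1 h2 hc
      have : l ≤ p := Finset.min'_le _ _ (by
        simp only [hL, Finset.mem_filter, Finset.mem_univ, true_and]
        exact ⟨h1, hc.1, hc.2⟩)
      omega
    set x' := x * Equiv.swap k l with hx'
    -- the key rectangle inequality
    have hkey : ∀ r c, (k:ℕ) < c → c ≤ (l:ℕ) → (x k:ℕ) ≤ r → r < (x l:ℕ) →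
        NN y r c + 1 ≤ NN x r c := by
      intro r c hck hcl hr1 hr2
      by_contra hcon
      push_neg at hcon
      set R := (y k : ℕ) with hR
      have hrR : r < R := by omega
      have eAx := NN_split x r c ((k:ℕ)+1) (by omega)
      have eAy := NN_split y r c ((k:ℕ)+1) (by omega)
      have eRx := NN_split x R c ((k:ℕ)+1) (by omega)
      have eRy := NN_split y R c ((k:ℕ)+1) (by omega)
      set A := (Finset.univ.filter fun p : Fin n =>
        (k:ℕ)+1 ≤ (p:ℕ) ∧ (p:ℕ) < c ∧ ((x p:ℕ) ≤ r)) with hA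
      set AR := (Finset.univ.filter fun p : Fin n =>
        (k:ℕ)+1 ≤ (p:ℕ) ∧ (p:ℕ) < c ∧ ((x p:ℕ) ≤ R)) with hAR
      set B := (Finset.univ.filter fun p : Fin n =>
        (k:ℕ)+1 ≤ (p:ℕ) ∧ (p:ℕ) < c ∧ ((y p:ℕ) ≤ r)) with hB
      set BR := (Finset.univ.filter fun p : Fin n =>
        (k:ℕ)+1 ≤ (p:ℕ) ∧ (p:ℕ) < c ∧ ((y p:ℕ) ≤ R)) with hBR
      have hAeq : A = AR := by
        rw [hA, hAR]
        apply Finset.filter_congr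
        intro p _
        by_cases hp : (k:ℕ)+1 ≤ (p:ℕ) ∧ (p:ℕ) < c
        · have hkp : k < p := by omega
          have hpl : p < l := by omega
          have hmin := hlmin p hkp hpl
          have hxpk : x p ≠ x k := fun hc => (by omega : p ≠ k) (x.injective hc)
          constructor
          · rintro ⟨e1, e2, e3⟩
            exact ⟨e1, e2, by omega⟩
          · rintro ⟨e1, e2, e3⟩
            refine ⟨e1, e2, ?_⟩
            have : ¬ (x k < x p) := fun hc => hmin ⟨hc, e3⟩
            omega
        · constructor
          · rintro ⟨e1, e2, _⟩; exact absurd ⟨e1, e2⟩ hp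
          · rintro ⟨e1, e2, _⟩; exact absurd ⟨e1, e2⟩ hp
      have hBsub : B ⊆ BR := by
        rw [hB, hBR]
        intro p hp
        rw [Finset.mem_filter] at hp ⊢
        obtain ⟨h0, e1, e2, e3⟩ := hp
        exact ⟨h0, e1, e2, by omega⟩
      have hBcard : B.card ≤ BR.card := Finset.card_le_card hBsub
      -- evaluate the succ-columns
      have exr := NN_succ x r (k:ℕ) hkn
      have eyr := NN_succ y r (k:ℕ) hkn
      have exR := NN_succ x R (k:ℕ) hkn
      have eyR := NN_succ y R (k:ℕ) hkn
      rw [hmkk] at exr eyr exR eyR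
      rw [if_pos (by omega : (x k:ℕ) ≤ r)] at exr
      rw [if_neg (by omega : ¬ (y k:ℕ) ≤ r)] at eyr
      rw [if_pos (by omega : (x k:ℕ) ≤ R)] at exR
      rw [if_pos (by omega : (y k:ℕ) ≤ R)] at eyR
      have hpr := hpreN r
      have hpR := hpreN R
      have hdR := hdom R c
      rw [eAx, exr] at hcon
      rw [eAy, eyr] at hcon
      rw [eRx, exR, eRy, eyR] at hdR
      rw [hAeq] at hcon
      omega
    have hstep : BruhatLE x x' := swap_step_le x hkl hxkl
    have hdom' : ∀ r c, NN y r c ≤ NN x' r c := by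
      intro r c
      rcases le_or_gt c (k:ℕ) with hc | hc
      · rw [hx', NN_swap_eq_low x hkl hc]
        exact hdom r c
      rcases lt_or_ge (l:ℕ) c with hc2 | hc2
      · rw [hx', NN_swap_eq_high x hkl hc2]
        exact hdom r c
      by_cases hr : (x k:ℕ) ≤ r ∧ r < (x l:ℕ)
      · have h1 := hkey r c hc hc2 hr.1 hr.2
        have h2 := NN_swap_mid_minus x hkl hc hc2 hr.1 hr.2
        rw [hx']
        omega
      · rw [hx', NN_swap_mid_eq x hkl hc hc2 (by omega)]
        exact hdom r c
    have hmono : ∀ r c, NN x' r c ≤ NN x r c := by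
      intro r c
      rw [hx']
      exact NN_swap_le x hkl hxkl r c
    have hstrict : NN x' ((x k:ℕ)) ((k:ℕ)+1) < NN x ((x k:ℕ)) ((k:ℕ)+1) := by
      have := NN_swap_mid_minus x hkl (r := (x k:ℕ)) (c := (k:ℕ)+1)
        (by omega) (by omega) (le_refl _) (by omega)
      rw [hx']
      omega
    have hμ' : (∑ p ∈ Finset.range n ×ˢ Finset.range (n+2),
        (NN x' p.1 p.2 - NN y p.1 p.2)) <
        (∑ p ∈ Finset.range n ×ˢ Finset.range (n+2), (NN x p.1 p.2 - NN y p.1 p.2)) := by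
      apply Finset.sum_lt_sum
      · rintro ⟨r, c⟩ _
        have h1 := hmono r c
        have h2 := hdom' r c
        simp only
        omega
      · refine ⟨((x k:ℕ), (k:ℕ)+1), ?_, ?_⟩
        · rw [Finset.mem_product]
          constructor
          · rw [Finset.mem_range]; exact (x k).isLt
          · rw [Finset.mem_range]; omega
        · have h1 := hstrict
          have h2 := hdom' ((x k:ℕ)) ((k:ℕ)+1)
          simp only
          omega
    refine Relation.ReflTransGen.head ⟨invCount_lt_swap x hkl hxkl, k, l, ne_of_lt hkl, rfl⟩ ?_
    exact ih x' y hdom' (by omega)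

lemma bruhat_of_NN {x y : Equiv.Perm (Fin n)} (h : ∀ r c, NN y r c ≤ NN x r c) :
    BruhatLE x y :=
  bruhat_of_NN_aux _ x y h (Nat.lt_succ_self _)

lemma liftD {u x : Equiv.Perm (Fin n)} (hdom : ∀ r c, NN x r c ≤ NN u r c) {j k : Fin n}
    (hk : (k:ℕ) = (j:ℕ) + 1) (hu : u j < u k) (r c : ℕ) :
    NN (x * Equiv.swap j k) r c ≤ NN u r c := by
  have hjk : j < k := by omega
  rcases le_or_gt c (j:ℕ) with hc | hc
  · rw [NN_swap_eq_low x hjk hc]; exact hdom r c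
  rcases lt_or_ge (k:ℕ) c with hc2 | hc2
  · rw [NN_swap_eq_high x hjk hc2]; exact hdom r c
  have hcv : c = (j:ℕ)+1 := by omega
  subst hcv
  have hjn : (j:ℕ) < n := j.isLt
  have hkn : (k:ℕ) < n := k.isLt
  have e1 := NN_succ x r (j:ℕ) hjn
  have e2 := NN_succ x r (k:ℕ) hkn
  have e3 := NN_succ u r (j:ℕ) hjn
  have e4 := NN_succ u r (k:ℕ) hkn
  have hmj : (⟨(j:ℕ), hjn⟩ : Fin n) = j := rfl
  have hmk : (⟨(k:ℕ), hkn⟩ : Fin n) = k := rfl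
  rw [hmj] at e1 e3
  rw [hmk] at e2 e4
  rw [hk] at e2 e4
  have hd0 := hdom r (j:ℕ)
  by_cases hm1 : (x j:ℕ) ≤ r ∧ r < (x k:ℕ)
  · have hmm := NN_swap_mid_minus x hjk (r := r) (c := (j:ℕ)+1) (by omega) (by omega) hm1.1 hm1.2
    have hd1 := hdom r ((j:ℕ)+1)
    omega
  by_cases hm2 : (x k:ℕ) ≤ r ∧ r < (x j:ℕ)
  · have hpp := NN_swap_mid_plus x hjk (r := r) (c := (j:ℕ)+1) (by omega) (by omega) hm2.1 hm2.2
    rw [if_neg (by omega : ¬ ((x j:ℕ) ≤ r))] at e1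
    rw [if_pos hm2.1] at e2
    by_cases cuj : (u j:ℕ) ≤ r
    · rw [if_pos cuj] at e3
      omega
    · rw [if_neg cuj] at e3
      rw [if_neg (by omega : ¬ ((u k:ℕ) ≤ r))] at e4
      have hd2 := hdom r ((j:ℕ)+1+1)
      omega
  · rw [NN_swap_mid_eq x hjk (r := r) (c := (j:ℕ)+1) (by omega) (by omega) (by omega)]
    exact hdom r ((j:ℕ)+1)

lemma liftC {x v : Equiv.Perm (Fin n)} (hdom : ∀ r c, NN v r c ≤ NN x r c) {j k : Fin n}
    (hk : (k:ℕ) = (j:ℕ) + 1) (hv : v k < v j) (r c : ℕ) :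
    NN v r c ≤ NN (x * Equiv.swap j k) r c := by
  have hjk : j < k := by omega
  rcases le_or_gt c (j:ℕ) with hc | hc
  · rw [NN_swap_eq_low x hjk hc]; exact hdom r c
  rcases lt_or_ge (k:ℕ) c with hc2 | hc2
  · rw [NN_swap_eq_high x hjk hc2]; exact hdom r c
  have hcv : c = (j:ℕ)+1 := by omega
  subst hcv
  have hjn : (j:ℕ) < n := j.isLt
  have hkn : (k:ℕ) < n := k.isLt
  have e1 := NN_succ x r (j:ℕ) hjn
  have e2 := NN_succ x r (k:ℕ) hkn
  have e3 := NN_succ v r (j:ℕ) hjn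
  have e4 := NN_succ v r (k:ℕ) hkn
  have hmj : (⟨(j:ℕ), hjn⟩ : Fin n) = j := rfl
  have hmk : (⟨(k:ℕ), hkn⟩ : Fin n) = k := rfl
  rw [hmj] at e1 e3
  rw [hmk] at e2 e4
  rw [hk] at e2 e4
  have hd0 := hdom r (j:ℕ)
  by_cases hm1 : (x j:ℕ) ≤ r ∧ r < (x k:ℕ)
  · have hmm := NN_swap_mid_minus x hjk (r := r) (c := (j:ℕ)+1) (by omega) (by omega) hm1.1 hm1.2
    rw [if_pos hm1.1] at e1
    rw [if_neg (by omega : ¬ ((x k:ℕ) ≤ r))] at e2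
    by_cases cvk : (v k:ℕ) ≤ r
    · rw [if_pos cvk] at e4
      have hd2 := hdom r ((j:ℕ)+1+1)
      omega
    · rw [if_neg cvk] at e4
      rw [if_neg (by omega : ¬ ((v j:ℕ) ≤ r))] at e3
      omega
  by_cases hm2 : (x k:ℕ) ≤ r ∧ r < (x j:ℕ)
  · have hpp := NN_swap_mid_plus x hjk (r := r) (c := (j:ℕ)+1) (by omega) (by omega) hm2.1 hm2.2
    have hd1 := hdom r ((j:ℕ)+1)
    omega
  · rw [NN_swap_mid_eq x hjk (r := r) (c := (j:ℕ)+1) (by omega) (by omega) (by omega)]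
    exact hdom r ((j:ℕ)+1)

lemma card_filter_val_lt (c : ℕ) (hc : c ≤ n) :
    ((Finset.univ : Finset (Fin n)).filter fun p : Fin n => (p:ℕ) < c).card = c := by
  classical
  have h : ((Finset.univ : Finset (Fin n)).filter fun p : Fin n => (p:ℕ) < c)
      = (Finset.univ : Finset (Fin c)).map (Fin.castLEEmb hc) := by
    ext p
    simp only [Finset.mem_filter, Finset.mem_univ, true_and, Finset.mem_map]
    constructor
    · intro hp
      refine ⟨⟨(p:ℕ), hp⟩, ?_⟩
      apply Fin.ext
      simp [Fin.castLEEmb]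
    · rintro ⟨q, rfl⟩
      simpa [Fin.castLEEmb] using q.isLt
  rw [h, Finset.card_map, Finset.card_univ, Fintype.card_fin]

lemma card_filter_val_ge (c : ℕ) (hc : c ≤ n) :
    ((Finset.univ : Finset (Fin n)).filter fun p : Fin n => c ≤ (p:ℕ)).card = n - c := by
  classical
  have h := Finset.card_filter_add_card_filter_not
    (s := (Finset.univ : Finset (Fin n))) (p := fun p : Fin n => (p:ℕ) < c)
  rw [card_filter_val_lt c hc] at h
  have h2 : ((Finset.univ : Finset (Fin n)).filter fun p : Fin n => ¬ ((p:ℕ) < c))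
      = ((Finset.univ : Finset (Fin n)).filter fun p : Fin n => c ≤ (p:ℕ)) := by
    apply Finset.filter_congr
    intro p _
    omega
  rw [h2] at h
  have h3 : (Finset.univ : Finset (Fin n)).card = n := by
    rw [Finset.card_univ, Fintype.card_fin]
  omega

lemma minrep_V1 {v : Equiv.Perm (Fin n)} (hmin : IsHollowMinRep v) {m' : Fin n} {iN : ℕ}
    (hvmN : (v m' : ℕ) = n-1) (hm2 : (m':ℕ)+2 ≤ iN) (hiN : iN < n)
    (p : Fin n) (hp : (p:ℕ) < iN) (hpm : p ≠ m') : (v p : ℕ) < iN := by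
  classical
  by_contra hc
  push_neg at hc
  have hvpN : (v p : ℕ) ≠ n-1 := by
    intro h
    apply hpm
    apply v.injective
    apply Fin.ext
    rw [h, hvmN]
  set Q : Finset (Fin n) := Finset.univ.filter (fun q => (q:ℕ) < (p:ℕ) ∧ q ≠ m') with hQ
  set g : ℕ → Fin n := fun t => v⁻¹ ⟨min t (n-1), by omega⟩ with hg
  have hmapg : ∀ t ∈ Finset.Icc 1 (iN-1), g t ∈ Q := by
    intro t ht
    rw [Finset.mem_Icc] at ht
    obtain ⟨tv, htvv⟩ : ∃ tv : Fin n, (tv:ℕ) = min t (n-1) :=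
      ⟨⟨min t (n-1), by omega⟩, rfl⟩
    have htv : (tv:ℕ) = t := by omega
    have hgt : g t = v⁻¹ tv := by
      rw [hg]
      exact congrArg _ (Fin.ext htvv.symm)
    have hmono := hmin tv (v p) (by omega) (by omega) hvpN
    rw [Equiv.Perm.coe_inv, Equiv.symm_apply_apply] at hmono
    rw [hQ, Finset.mem_filter, hgt]
    refine ⟨Finset.mem_univ _, by omega, ?_⟩
    intro hcm
    have he : (tv : ℕ) = n-1 := by
      rw [← hvmN, ← hcm, Equiv.Perm.coe_inv, Equiv.apply_symm_apply]
    omega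
  have hinjg : Set.InjOn g (Finset.Icc 1 (iN-1) : Finset ℕ) := by
    intro s hs t ht hst
    rw [Finset.mem_coe, Finset.mem_Icc] at hs ht
    rw [hg] at hst
    simp only at hst
    have h1 := v⁻¹.injective hst
    have h3 := congrArg Fin.val h1
    simp only [Fin.val_mk] at h3
    omega
  have hcardT : (Finset.Icc 1 (iN-1)).card = iN-1 := by
    rw [Nat.card_Icc]
    omega
  have hcardQle := Finset.card_le_card_of_injOn g hmapg hinjg
  rcases lt_or_ge (m':ℕ) (p:ℕ) with hmp | hmp
  · have hQsub2 : Q ⊆ (Finset.univ.filter (fun q : Fin n => (q:ℕ) < (p:ℕ))).erase m' := by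
      intro q hq
      rw [hQ, Finset.mem_filter] at hq
      rw [Finset.mem_erase, Finset.mem_filter]
      exact ⟨hq.2.2, Finset.mem_univ _, hq.2.1⟩
    have hcard2 := Finset.card_le_card hQsub2
    rw [Finset.card_erase_of_mem
      (by rw [Finset.mem_filter]; exact ⟨Finset.mem_univ _, hmp⟩)] at hcard2
    rw [card_filter_val_lt (p:ℕ) (by omega)] at hcard2
    omega
  · have hQsub : Q ⊆ Finset.univ.filter (fun q : Fin n => (q:ℕ) < (p:ℕ)) := by
      intro q hq
      rw [hQ, Finset.mem_filter] at hq
      rw [Finset.mem_filter]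
      exact ⟨Finset.mem_univ _, hq.2.1⟩
    have hcard2 := Finset.card_le_card hQsub
    rw [card_filter_val_lt (p:ℕ) (by omega)] at hcard2
    omega

lemma minrep_V2 {v : Equiv.Perm (Fin n)} (hmin : IsHollowMinRep v) {M' : Fin n} {iN : ℕ}
    (hvM0 : (v M' : ℕ) = 0) (hM2 : iN+2 ≤ (M':ℕ))
    (p : Fin n) (hp : iN < (p:ℕ)) (hpM : p ≠ M') : iN+1 ≤ (v p : ℕ) := by
  classical
  by_contra hc
  push_neg at hc
  have hn1 : (M':ℕ) < n := M'.isLt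
  have hvp0 : (v p : ℕ) ≠ 0 := by
    intro h
    apply hpM
    apply v.injective
    apply Fin.ext
    rw [h, hvM0]
  set Q : Finset (Fin n) := Finset.univ.filter (fun q => (p:ℕ)+1 ≤ (q:ℕ) ∧ q ≠ M') with hQ
  set g : ℕ → Fin n := fun t => v⁻¹ ⟨min t (n-1), by omega⟩ with hg
  have hmapg : ∀ t ∈ Finset.Icc (iN+1) (n-2), g t ∈ Q := by
    intro t ht
    rw [Finset.mem_Icc] at ht
    obtain ⟨tv, htvv⟩ : ∃ tv : Fin n, (tv:ℕ) = min t (n-1) :=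
      ⟨⟨min t (n-1), by omega⟩, rfl⟩
    have htv : (tv:ℕ) = t := by omega
    have hgt : g t = v⁻¹ tv := by
      rw [hg]
      exact congrArg _ (Fin.ext htvv.symm)
    have hmono := hmin (v p) tv (by omega) hvp0 (by omega)
    rw [Equiv.Perm.coe_inv, Equiv.symm_apply_apply, ← Equiv.Perm.coe_inv] at hmono
    rw [hQ, Finset.mem_filter, hgt]
    refine ⟨Finset.mem_univ _, by omega, ?_⟩
    intro hcm
    have he : (tv : ℕ) = 0 := by
      rw [← hvM0, ← hcm, Equiv.Perm.coe_inv, Equiv.apply_symm_apply]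
    omega
  have hinjg : Set.InjOn g (Finset.Icc (iN+1) (n-2) : Finset ℕ) := by
    intro s hs t ht hst
    rw [Finset.mem_coe, Finset.mem_Icc] at hs ht
    rw [hg] at hst
    simp only at hst
    have h1 := v⁻¹.injective hst
    have h3 := congrArg Fin.val h1
    simp only [Fin.val_mk] at h3
    omega
  have hcardT : (Finset.Icc (iN+1) (n-2)).card = n-2-iN := by
    rw [Nat.card_Icc]
    omega
  have hcardQle := Finset.card_le_card_of_injOn g hmapg hinjg
  rcases lt_or_ge (p:ℕ) (M':ℕ) with hmp | hmp
  · have hQsub2 : Q ⊆ (Finset.univ.filter (fun q : Fin n => (p:ℕ)+1 ≤ (q:ℕ))).erase M' := by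
      intro q hq
      rw [hQ, Finset.mem_filter] at hq
      rw [Finset.mem_erase, Finset.mem_filter]
      exact ⟨hq.2.2, Finset.mem_univ _, hq.2.1⟩
    have hcard2 := Finset.card_le_card hQsub2
    rw [Finset.card_erase_of_mem
      (by rw [Finset.mem_filter]; exact ⟨Finset.mem_univ _, by omega⟩)] at hcard2
    rw [card_filter_val_ge ((p:ℕ)+1) (by omega)] at hcard2
    omega
  · have hQsub : Q ⊆ Finset.univ.filter (fun q : Fin n => (p:ℕ)+1 ≤ (q:ℕ)) := by
      intro q hq
      rw [hQ, Finset.mem_filter] at hq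
      rw [Finset.mem_filter]
      exact ⟨Finset.mem_univ _, hq.2.1⟩
    have hcard2 := Finset.card_le_card hQsub
    rw [card_filter_val_ge ((p:ℕ)+1) (by omega)] at hcard2
    omega

end Stmt7Aux

open Stmt7Aux Finset

set_option maxHeartbeats 2000000 in
/-- Let `α ∈ {0,+,−,*}ⁿ` have at least two entries `*` and an
isolated `*` at position `i` (i.e. `αᵢ = *` and no neighbour of `i` carries `*`).
Then the polytope `F = conv{e_b − e_a : α_a = α_b = *, a ≠ b}` is not a hollow
Bruhat polytope: there is no Bruhat interval `[u,v]` with `v` a minimal coset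
representative such that `F = conv{π(φ(x)) : x ∈ [u,v]}`. -/
theorem stmt7 (n : ℕ) (α : Fin n → HollowSymbol)
    (hstars : 2 ≤ (Finset.univ.filter fun i => α i = star).card)
    (i : Fin n) (hi : α i = star)
    (hiso : ∀ j : Fin n, ((j : ℕ) + 1 = (i : ℕ) ∨ (i : ℕ) + 1 = (j : ℕ)) → α j ≠ star) :
    ¬ ∃ u v : Equiv.Perm (Fin n), BruhatLE u v ∧ IsHollowMinRep v ∧
        convexHull ℝ
          {f | ∃ a b : Fin n, α a = star ∧ α b = star ∧ a ≠ b ∧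
            f = fun k => (if k = b then (1 : ℝ) else 0) - (if k = a then 1 else 0)} =
        convexHull ℝ (hollowVec '' {x | BruhatLE u x ∧ BruhatLE x v}) := by
  rintro ⟨u, v, huv, hmin, heq⟩
  classical
  set S := (Finset.univ.filter fun j => α j = star) with hS
  have hmemS : ∀ j : Fin n, j ∈ S ↔ α j = star := by
    intro j
    simp [hS]
  have hn2 : 2 ≤ n := by
    have h1 : S.card ≤ n := by
      have := Finset.card_filter_le (Finset.univ : Finset (Fin n)) (fun j => α j = star)
      simpa [Finset.card_univ] using this
    omega
  have h0n : 0 < n := by omega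
  have hNn : n - 1 < n := by omega
  set z0 : Fin n := ⟨0, h0n⟩ with hz0
  set zN : Fin n := ⟨n-1, hNn⟩ with hzN
  have hz0v : (z0 : ℕ) = 0 := rfl
  have hzNv : (zN : ℕ) = n - 1 := rfl
  clear_value z0 zN
  set Fset : Set (Fin n → ℝ) := {f | ∃ a b : Fin n, α a = star ∧ α b = star ∧ a ≠ b ∧
            f = fun k => (if k = b then (1 : ℝ) else 0) - (if k = a then 1 else 0)} with hFset
  set Iset : Set (Equiv.Perm (Fin n)) := {x | BruhatLE u x ∧ BruhatLE x v} with hIset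
  -- every point of the hull vanishes at non-star coordinates
  have hullF_zero : ∀ kk : Fin n, α kk ≠ star →
      ∀ z ∈ convexHull ℝ Fset, z kk = 0 := by
    intro kk hkk
    have hconv : Convex ℝ {z : Fin n → ℝ | z kk = 0} := by
      intro p hp q hq a b ha hb hab
      simp only [Set.mem_setOf_eq] at *
      simp [hp, hq]
    have hsub : Fset ⊆ {z : Fin n → ℝ | z kk = 0} := by
      rintro f ⟨a, b, ha, hb, hab, rfl⟩
      have h1 : kk ≠ b := fun hc => hkk (hc ▸ hb)
      have h2 : kk ≠ a := fun hc => hkk (hc ▸ ha)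
      simp [Set.mem_setOf_eq, h1, h2]
    intro z hz
    exact convexHull_min hsub hconv hz
  have hmemI : ∀ x : Equiv.Perm (Fin n), BruhatLE u x → BruhatLE x v →
      hollowVec x ∈ convexHull ℝ Fset := by
    intro x h1 h2
    rw [heq]
    exact subset_convexHull ℝ _ ⟨x, ⟨h1, h2⟩, rfl⟩
  -- every element of the interval has its 0 and n-1 at star positions
  have hCstar : ∀ x : Equiv.Perm (Fin n), BruhatLE u x → BruhatLE x v → ∀ p : Fin n,
      ((x p : ℕ) = 0 ∨ (x p : ℕ) = n - 1) → α p = star := by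
    intro x h1 h2 p hp
    by_contra hc
    have hz := hullF_zero p hc _ (hmemI x h1 h2)
    unfold hollowVec at hz
    rcases hp with hp | hp
    · rw [hp, if_neg (by omega), if_pos rfl] at hz
      norm_num at hz
    · rw [hp, if_pos rfl, if_neg (by omega)] at hz
      norm_num at hz
  -- realization of every star pair
  have hrealize : ∀ a b : Fin n, α a = star → α b = star → a ≠ b →
      ∃ x : Equiv.Perm (Fin n), BruhatLE u x ∧ BruhatLE x v ∧ x a = z0 ∧ x b = zN := by
    intro a b ha hb hab
    by_contra hno
    push_neg at hno
    have hsub : hollowVec '' Iset ⊆ {z : Fin n → ℝ | z b - z a ≤ 1} := by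
      rintro _ ⟨x, hx, rfl⟩
      simp only [Set.mem_setOf_eq]
      have hnab : ¬ ((x a : ℕ) = 0 ∧ (x b : ℕ) = n - 1) := by
        rintro ⟨e1, e2⟩
        have hxa : x a = z0 := by apply Fin.ext; rw [hz0v]; exact e1
        have hxb : x b = zN := by apply Fin.ext; rw [hzNv]; exact e2
        exact hno x hx.1 hx.2 hxa hxb
      unfold hollowVec
      split_ifs <;> first | (exfalso; omega) | norm_num
    have hconv : Convex ℝ {z : Fin n → ℝ | z b - z a ≤ 1} := by
      intro p hp q hq s t hs ht hst
      simp only [Set.mem_setOf_eq] at *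
      simp only [Pi.add_apply, Pi.smul_apply, smul_eq_mul]
      nlinarith [mul_le_mul_of_nonneg_left hp hs, mul_le_mul_of_nonneg_left hq ht]
    have h2 : convexHull ℝ (hollowVec '' Iset) ⊆ {z : Fin n → ℝ | z b - z a ≤ 1} :=
      convexHull_min hsub hconv
    have hfmem : (fun k => (if k = b then (1:ℝ) else 0) - (if k = a then 1 else 0))
        ∈ convexHull ℝ Fset :=
      subset_convexHull ℝ _ ⟨a, b, ha, hb, hab, rfl⟩
    rw [heq] at hfmem
    have hle := h2 hfmem
    simp only [Set.mem_setOf_eq] at hle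
    rw [if_neg (Ne.symm hab), if_neg hab] at hle
    norm_num at hle
  -- counting helpers
  have hNN0mem : ∀ (x : Equiv.Perm (Fin n)) (c : ℕ), 1 ≤ NN x 0 c →
      ∃ p : Fin n, (p:ℕ) < c ∧ (x p : ℕ) = 0 := by
    intro x c h
    rw [NN] at h
    obtain ⟨p, hp⟩ := Finset.card_pos.mp h
    rw [Finset.mem_filter] at hp
    exact ⟨p, hp.2.1, by omega⟩
  have hDDNmem : ∀ (x : Equiv.Perm (Fin n)) (c : ℕ), 1 ≤ DD x (n-1) c →
      ∃ p : Fin n, c ≤ (p:ℕ) ∧ (x p : ℕ) = n-1 := by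
    intro x c h
    rw [DD] at h
    obtain ⟨p, hp⟩ := Finset.card_pos.mp h
    rw [Finset.mem_filter] at hp
    have h2 := (x p).isLt
    exact ⟨p, hp.2.1, by omega⟩
  have hNN0ge : ∀ (x : Equiv.Perm (Fin n)) (p : Fin n) (c : ℕ), (p:ℕ) < c → (x p:ℕ) = 0 →
      1 ≤ NN x 0 c := by
    intro x p c h1 h2
    rw [NN]
    apply Finset.card_pos.mpr
    exact ⟨p, by rw [Finset.mem_filter]; exact ⟨Finset.mem_univ _, h1, by omega⟩⟩
  have hDDNge : ∀ (x : Equiv.Perm (Fin n)) (p : Fin n) (c : ℕ), c ≤ (p:ℕ) → (x p:ℕ) = n-1 →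
      1 ≤ DD x (n-1) c := by
    intro x p c h1 h2
    rw [DD]
    apply Finset.card_pos.mpr
    exact ⟨p, by rw [Finset.mem_filter]; exact ⟨Finset.mem_univ _, h1, by omega⟩⟩
  -- extremes of S
  have hSne : S.Nonempty := Finset.card_pos.mp (by omega)
  set m' := S.min' hSne with hm'
  set M' := S.max' hSne with hM'
  have hm'S : m' ∈ S := S.min'_mem _
  have hM'S : M' ∈ S := S.max'_mem _
  have hαm' : α m' = HollowSymbol.star := (hmemS m').mp hm'S
  have hαM' : α M' = HollowSymbol.star := (hmemS M').mp hM'S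
  have hmM : m' < M' := S.min'_lt_max'_of_card (by omega)
  have hmax' : ∀ a ∈ S, a ≤ M' := fun a ha => S.le_max' a ha
  have hmin'le : ∀ a ∈ S, m' ≤ a := fun a ha => S.min'_le a ha
  clear_value m' M'
  have hsecond : ∀ a : Fin n, ∃ b, α b = HollowSymbol.star ∧ b ≠ a := by
    intro a
    rcases eq_or_ne a m' with rfl | h
    · exact ⟨M', hαM', by omega⟩
    · exact ⟨m', hαm', by omega⟩
  -- the pair of v
  have hpvS : α (v⁻¹ z0) = HollowSymbol.star := by
    apply hCstar v huv Relation.ReflTransGen.refl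
    left
    rw [Equiv.Perm.coe_inv, Equiv.apply_symm_apply]
    exact hz0v
  have hqvS : α (v⁻¹ zN) = HollowSymbol.star := by
    apply hCstar v huv Relation.ReflTransGen.refl
    right
    rw [Equiv.Perm.coe_inv, Equiv.apply_symm_apply]
    exact hzNv
  have hpvmax : ∀ a : Fin n, α a = HollowSymbol.star → (a:ℕ) ≤ ((v⁻¹ z0 : Fin n):ℕ) := by
    intro a ha
    obtain ⟨b, hb, hba⟩ := hsecond a
    obtain ⟨x, hux, hxv, hxa, hxb⟩ := hrealize a b ha hb (Ne.symm hba)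
    have h1 : 1 ≤ NN v 0 (((v⁻¹ z0 : Fin n):ℕ)+1) := by
      apply hNN0ge v (v⁻¹ z0) _ (by omega)
      rw [Equiv.Perm.coe_inv, Equiv.apply_symm_apply]
      exact hz0v
    have h2 := bruhat_NN hxv 0 (((v⁻¹ z0 : Fin n):ℕ)+1)
    obtain ⟨p, hp1, hp2⟩ := hNN0mem x (((v⁻¹ z0 : Fin n):ℕ)+1) (by omega)
    have hpa : p = a := by
      apply x.injective
      apply Fin.ext
      rw [hp2, hxa, hz0v]
    omega
  have hqvmin : ∀ a : Fin n, α a = HollowSymbol.star → ((v⁻¹ zN : Fin n):ℕ) ≤ (a:ℕ) := by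
    intro a ha
    obtain ⟨b, hb, hba⟩ := hsecond a
    obtain ⟨x, hux, hxv, hxb, hxa⟩ := hrealize b a hb ha hba
    have h1 : 1 ≤ DD v (n-1) ((v⁻¹ zN : Fin n):ℕ) := by
      apply hDDNge v (v⁻¹ zN) _ (by omega)
      rw [Equiv.Perm.coe_inv, Equiv.apply_symm_apply]
      exact hzNv
    have h2 := bruhat_DD hxv (n-1) ((v⁻¹ zN : Fin n):ℕ)
    obtain ⟨p, hp1, hp2⟩ := hDDNmem x ((v⁻¹ zN : Fin n):ℕ) (by omega)
    have hpa : p = a := by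
      apply x.injective
      apply Fin.ext
      rw [hp2, hxa, hzNv]
    omega
  have hvM : v M' = z0 := by
    have h1 : v⁻¹ z0 ∈ S := (hmemS _).mpr hpvS
    have h2 : (M':ℕ) ≤ ((v⁻¹ z0 : Fin n):ℕ) := hpvmax M' hαM'
    have h3 : v⁻¹ z0 ≤ M' := hmax' _ h1
    have h4 : v⁻¹ z0 = M' := by omega
    rw [← h4, Equiv.Perm.coe_inv, Equiv.apply_symm_apply]
  have hvm : v m' = zN := by
    have h1 : v⁻¹ zN ∈ S := (hmemS _).mpr hqvS
    have h2 : ((v⁻¹ zN : Fin n):ℕ) ≤ (m':ℕ) := hqvmin m' hαm'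
    have h3 : m' ≤ v⁻¹ zN := hmin'le _ h1
    have h4 : v⁻¹ zN = m' := by omega
    rw [← h4, Equiv.Perm.coe_inv, Equiv.apply_symm_apply]
  -- location of i among the stars
  have hiS : i ∈ S := (hmemS i).mpr hi
  have him : m' ≤ i := hmin'le i hiS
  have hiM : i ≤ M' := hmax' i hiS
  rcases eq_or_ne i m' with him' | him'
  · -- case i = m' : push the value 0 one step to the right
    have hjlt : (m':ℕ)+1 < n := by
      have := M'.isLt
      omega
    set jp : Fin n := ⟨(m':ℕ)+1, hjlt⟩ with hjp
    have hjpv : (jp:ℕ) = (m':ℕ)+1 := rfl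
    clear_value jp
    have hαjp : α jp ≠ HollowSymbol.star := by
      apply hiso
      right
      omega
    obtain ⟨x₄, hux₄, hx₄v, hx₄m, hx₄M⟩ := hrealize m' M' hαm' hαM' (by omega)
    have hmj : m' < jp := by omega
    have hx₄j : x₄ m' < x₄ jp := by
      have h1 : x₄ jp ≠ z0 := by
        intro hc
        have h2 := x₄.injective (hc.trans hx₄m.symm)
        omega
      have h2 : (x₄ jp : ℕ) ≠ 0 := fun hc => h1 (Fin.ext (by rw [hz0v]; exact hc))
      rw [hx₄m]
      omega
    have huy : BruhatLE u (x₄ * Equiv.swap m' jp) :=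
      Relation.ReflTransGen.trans hux₄ (swap_step_le x₄ hmj hx₄j)
    have hvj : v jp < v m' := by
      have h1 : v jp ≠ zN := by
        intro hc
        have h2 := v.injective (hc.trans hvm.symm)
        omega
      have h2 : (v jp : ℕ) ≠ n-1 := fun hc => h1 (Fin.ext (by rw [hzNv]; exact hc))
      have h3 := (v jp).isLt
      rw [hvm]
      omega
    have hyv : BruhatLE (x₄ * Equiv.swap m' jp) v :=
      bruhat_of_NN (fun r c => liftC (fun r c => bruhat_NN hx₄v r c) hjpv hvj r c)
    have hyj : (((x₄ * Equiv.swap m' jp) jp : Fin n) : ℕ) = 0 := by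
      have he : (x₄ * Equiv.swap m' jp) jp = x₄ m' := by
        simp [Equiv.Perm.mul_apply, Equiv.swap_apply_right]
      rw [he, hx₄m, hz0v]
    exact hαjp (hCstar _ huy hyv jp (Or.inl hyj))
  rcases eq_or_ne i M' with hiM' | hiM'
  · -- case i = M' : push the value n-1 one step to the left
    have hjlt : (M':ℕ)-1 < n := by
      have := M'.isLt
      omega
    have h1M : 1 ≤ (M':ℕ) := by omega
    set jm : Fin n := ⟨(M':ℕ)-1, hjlt⟩ with hjm
    have hjmv : (jm:ℕ) = (M':ℕ)-1 := rfl
    clear_value jm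
    have hαjm : α jm ≠ HollowSymbol.star := by
      apply hiso
      left
      omega
    obtain ⟨x₄, hux₄, hx₄v, hx₄m, hx₄M⟩ := hrealize m' M' hαm' hαM' (by omega)
    have hmj : jm < M' := by omega
    have hx₄j : x₄ jm < x₄ M' := by
      have h1 : x₄ jm ≠ zN := by
        intro hc
        have h2 := x₄.injective (hc.trans hx₄M.symm)
        omega
      have h2 : (x₄ jm : ℕ) ≠ n-1 := fun hc => h1 (Fin.ext (by rw [hzNv]; exact hc))
      have h3 := (x₄ jm).isLt
      rw [hx₄M]
      omega
    have huy : BruhatLE u (x₄ * Equiv.swap jm M') :=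
      Relation.ReflTransGen.trans hux₄ (swap_step_le x₄ hmj hx₄j)
    have hvj : v M' < v jm := by
      have h1 : v jm ≠ z0 := by
        intro hc
        have h2 := v.injective (hc.trans hvM.symm)
        omega
      have h2 : (v jm : ℕ) ≠ 0 := fun hc => h1 (Fin.ext (by rw [hz0v]; exact hc))
      rw [hvM]
      omega
    have hyv : BruhatLE (x₄ * Equiv.swap jm M') v :=
      bruhat_of_NN (fun r c => liftC (fun r c => bruhat_NN hx₄v r c) (by omega) hvj r c)
    have hyj : (((x₄ * Equiv.swap jm M') jm : Fin n) : ℕ) = n-1 := by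
      have he : (x₄ * Equiv.swap jm M') jm = x₄ M' := by
        simp [Equiv.Perm.mul_apply, Equiv.swap_apply_left]
      rw [he, hx₄M, hzNv]
    exact hαjm (hCstar _ huy hyv jm (Or.inr hyj))
  -- main case : m' < i < M'
  have hmi : m' < i := by omega
  have hiM2 : i < M' := by omega
  have h1i : 1 ≤ (i:ℕ) := by omega
  have him1lt : (i:ℕ)-1 < n := by omega
  set im1 : Fin n := ⟨(i:ℕ)-1, him1lt⟩ with him1
  have him1v : (im1:ℕ) = (i:ℕ)-1 := rfl
  clear_value im1
  have hαim1 : α im1 ≠ HollowSymbol.star := hiso im1 (Or.inl (by omega))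
  have hm2 : (m':ℕ) ≤ (i:ℕ)-2 := by
    have hne : m' ≠ im1 := fun hc => hαim1 (hc ▸ hαm')
    omega
  have hip : (i:ℕ)+1 < n := by
    have := M'.isLt
    omega
  set ip1 : Fin n := ⟨(i:ℕ)+1, hip⟩ with hip1
  have hip1v : (ip1:ℕ) = (i:ℕ)+1 := rfl
  clear_value ip1
  have hαip1 : α ip1 ≠ HollowSymbol.star := hiso ip1 (Or.inr (by omega))
  have hM2 : (i:ℕ)+2 ≤ (M':ℕ) := by
    have hne : M' ≠ ip1 := fun hc => hαip1 (hc ▸ hαM')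
    omega
  obtain ⟨x₁, hux₁, hx₁v, hx₁i, hx₁m⟩ := hrealize i m' hi hαm' (by omega)
  obtain ⟨x₂, hux₂, hx₂v, hx₂M, hx₂i⟩ := hrealize M' i hαM' hi (by omega)
  obtain ⟨x₃, hux₃, hx₃v, hx₃m, hx₃i⟩ := hrealize m' i hαm' hi (by omega)
  -- L1 : the value of u at i-1 is larger than at i
  have hL1 : u i < u im1 := by
    rcases lt_or_gt_of_ne
      (fun hc => (by omega : im1 ≠ i) (u.injective hc) : u im1 ≠ u i) with hlt | hgt
    swap
    · exact hgt
    exfalso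
    have hyi : (x₁ * Equiv.swap im1 i) im1 = x₁ i := by
      simp [Equiv.Perm.mul_apply, Equiv.swap_apply_left]
    have hyy : (x₁ * Equiv.swap im1 i) * Equiv.swap im1 i = x₁ := by
      rw [mul_assoc, Equiv.swap_mul_self, mul_one]
    have hx1im1 : (x₁ im1 : ℕ) ≠ 0 := by
      intro hc
      have h1 : x₁ im1 = z0 := Fin.ext (by rw [hz0v]; exact hc)
      have h2 := x₁.injective (h1.trans hx₁i.symm)
      omega
    have hyval : (x₁ * Equiv.swap im1 i) im1 < (x₁ * Equiv.swap im1 i) i := by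
      have e1 : (x₁ * Equiv.swap im1 i) i = x₁ im1 := by
        simp [Equiv.Perm.mul_apply, Equiv.swap_apply_right]
      rw [hyi, e1, hx₁i]
      omega
    have hyx₁ : BruhatLE (x₁ * Equiv.swap im1 i) x₁ := by
      have hstep := swap_step_le (x₁ * Equiv.swap im1 i) (by omega : im1 < i) hyval
      rwa [hyy] at hstep
    have hyv : BruhatLE (x₁ * Equiv.swap im1 i) v := Relation.ReflTransGen.trans hyx₁ hx₁v
    have huy : BruhatLE u (x₁ * Equiv.swap im1 i) :=
      bruhat_of_NN (fun r c =>
        liftD (fun r c => bruhat_NN hux₁ r c) (by omega : (i:ℕ) = (im1:ℕ)+1) hlt r c)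
    have hyj : (((x₁ * Equiv.swap im1 i) im1 : Fin n) : ℕ) = 0 := by
      rw [hyi, hx₁i, hz0v]
    exact hαim1 (hCstar _ huy hyv im1 (Or.inl hyj))
  -- L1' : the value of u at i is larger than at i+1
  have hL1' : u ip1 < u i := by
    rcases lt_or_gt_of_ne
      (fun hc => (by omega : i ≠ ip1) (u.injective hc) : u i ≠ u ip1) with hlt | hgt
    swap
    · exact hgt
    exfalso
    have hyi : (x₃ * Equiv.swap i ip1) ip1 = x₃ i := by
      simp [Equiv.Perm.mul_apply, Equiv.swap_apply_right]
    have hyy : (x₃ * Equiv.swap i ip1) * Equiv.swap i ip1 = x₃ := by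
      rw [mul_assoc, Equiv.swap_mul_self, mul_one]
    have hx3ip : (x₃ ip1 : ℕ) ≠ n-1 := by
      intro hc
      have h1 : x₃ ip1 = zN := Fin.ext (by rw [hzNv]; exact hc)
      have h2 := x₃.injective (h1.trans hx₃i.symm)
      omega
    have hyval : (x₃ * Equiv.swap i ip1) i < (x₃ * Equiv.swap i ip1) ip1 := by
      have e1 : (x₃ * Equiv.swap i ip1) i = x₃ ip1 := by
        simp [Equiv.Perm.mul_apply, Equiv.swap_apply_left]
      have h3 := (x₃ ip1).isLt
      rw [hyi, e1, hx₃i]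
      omega
    have hyx₃ : BruhatLE (x₃ * Equiv.swap i ip1) x₃ := by
      have hstep := swap_step_le (x₃ * Equiv.swap i ip1) (by omega : i < ip1) hyval
      rwa [hyy] at hstep
    have hyv : BruhatLE (x₃ * Equiv.swap i ip1) v := Relation.ReflTransGen.trans hyx₃ hx₃v
    have huy : BruhatLE u (x₃ * Equiv.swap i ip1) :=
      bruhat_of_NN (fun r c =>
        liftD (fun r c => bruhat_NN hux₃ r c) (by omega : (ip1:ℕ) = (i:ℕ)+1) hlt r c)
    have hyj : (((x₃ * Equiv.swap i ip1) ip1 : Fin n) : ℕ) = n-1 := by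
      rw [hyi, hx₃i, hzNv]
    exact hαip1 (hCstar _ huy hyv ip1 (Or.inr hyj))
  -- V1 and V2 : structure of v away from m', M'
  have hV1 : ∀ p : Fin n, (p:ℕ) < (i:ℕ) → p ≠ m' → (v p : ℕ) < (i:ℕ) := by
    intro p hp hpm
    exact minrep_V1 hmin (by rw [hvm, hzNv]) (by omega) i.isLt p hp hpm
  have hV2 : ∀ p : Fin n, (i:ℕ) < (p:ℕ) → p ≠ M' → (i:ℕ)+1 ≤ (v p : ℕ) := by
    intro p hp hpM
    exact minrep_V2 hmin (by rw [hvM, hz0v]) (by omega) p hp hpM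
  -- D1 : u i has small value
  have hD1 : (u i : ℕ) < (i:ℕ) := by
    have hsubv : ((Finset.univ.filter (fun q : Fin n => (q:ℕ) < (i:ℕ))).erase m') ⊆
        (Finset.univ.filter (fun q : Fin n => (q:ℕ) < (i:ℕ) ∧ ((v q : ℕ) ≤ (i:ℕ)-1))) := by
      intro q hq
      rw [Finset.mem_erase, Finset.mem_filter] at hq
      rw [Finset.mem_filter]
      have := hV1 q hq.2.2 hq.1
      exact ⟨Finset.mem_univ _, hq.2.2, by omega⟩
    have hNNv : (i:ℕ)-1 ≤ NN v ((i:ℕ)-1) (i:ℕ) := by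
      have hcard := Finset.card_le_card hsubv
      rw [Finset.card_erase_of_mem
        (by rw [Finset.mem_filter]; exact ⟨Finset.mem_univ _, by omega⟩)] at hcard
      rw [card_filter_val_lt (i:ℕ) (by omega)] at hcard
      have hrfl : NN v ((i:ℕ)-1) (i:ℕ) = (Finset.univ.filter
        (fun q : Fin n => (q:ℕ) < (i:ℕ) ∧ ((v q : ℕ) ≤ (i:ℕ)-1))).card := rfl
      omega
    have hNx1 : (i:ℕ) ≤ NN x₁ ((i:ℕ)-1) ((i:ℕ)+1) := by
      have e1 := NN_succ x₁ ((i:ℕ)-1) (i:ℕ) i.isLt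
      have hmki : (⟨(i:ℕ), i.isLt⟩ : Fin n) = i := rfl
      rw [hmki, if_pos (by rw [hx₁i, hz0v]; omega)] at e1
      have h2 := bruhat_NN hx₁v ((i:ℕ)-1) (i:ℕ)
      omega
    have hNu := bruhat_NN hux₁ ((i:ℕ)-1) ((i:ℕ)+1)
    by_contra hcon
    push_neg at hcon
    have hsubU : (Finset.univ.filter
        (fun q : Fin n => (q:ℕ) < (i:ℕ)+1 ∧ ((u q:ℕ) ≤ (i:ℕ)-1))) ⊆
        (((Finset.univ.filter (fun q : Fin n => (q:ℕ) < (i:ℕ)+1)).erase im1).erase i) := by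
      intro q hq
      rw [Finset.mem_filter] at hq
      rw [Finset.mem_erase, Finset.mem_erase, Finset.mem_filter]
      have hqi : q ≠ i := by
        intro hceq
        rw [hceq] at hq
        omega
      have hqim : q ≠ im1 := by
        intro hceq
        rw [hceq] at hq
        omega
      exact ⟨hqi, hqim, Finset.mem_univ _, hq.2.1⟩
    have hmem1 : i ∈ (Finset.univ.filter (fun q : Fin n => (q:ℕ) < (i:ℕ)+1)).erase im1 := by
      rw [Finset.mem_erase, Finset.mem_filter]
      exact ⟨by omega, Finset.mem_univ _, by omega⟩
    have hmem2 : im1 ∈ Finset.univ.filter (fun q : Fin n => (q:ℕ) < (i:ℕ)+1) := by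
      rw [Finset.mem_filter]
      exact ⟨Finset.mem_univ _, by omega⟩
    have hcardU := Finset.card_le_card hsubU
    rw [Finset.card_erase_of_mem hmem1, Finset.card_erase_of_mem hmem2,
      card_filter_val_lt ((i:ℕ)+1) (by omega)] at hcardU
    have hrfl : NN u ((i:ℕ)-1) ((i:ℕ)+1) = (Finset.univ.filter
      (fun q : Fin n => (q:ℕ) < (i:ℕ)+1 ∧ ((u q:ℕ) ≤ (i:ℕ)-1))).card := rfl
    omega
  -- D2 : u i has large value
  have hD2 : (i:ℕ) < (u i : ℕ) := by
    have hsubv : ((Finset.univ.filter (fun q : Fin n => (i:ℕ)+1 ≤ (q:ℕ))).erase M') ⊆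
        (Finset.univ.filter (fun q : Fin n => (i:ℕ)+1 ≤ (q:ℕ) ∧ ((i:ℕ)+1 ≤ (v q : ℕ)))) := by
      intro q hq
      rw [Finset.mem_erase, Finset.mem_filter] at hq
      rw [Finset.mem_filter]
      have := hV2 q (by omega) hq.1
      exact ⟨Finset.mem_univ _, hq.2.2, by omega⟩
    have hDDv : n-2-(i:ℕ) ≤ DD v ((i:ℕ)+1) ((i:ℕ)+1) := by
      have hcard := Finset.card_le_card hsubv
      rw [Finset.card_erase_of_mem
        (by rw [Finset.mem_filter]; exact ⟨Finset.mem_univ _, by omega⟩)] at hcard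
      rw [card_filter_val_ge ((i:ℕ)+1) (by omega)] at hcard
      have hrfl : DD v ((i:ℕ)+1) ((i:ℕ)+1) = (Finset.univ.filter
        (fun q : Fin n => (i:ℕ)+1 ≤ (q:ℕ) ∧ ((i:ℕ)+1 ≤ (v q : ℕ)))).card := rfl
      omega
    have hDx2 : n-1-(i:ℕ) ≤ DD x₂ ((i:ℕ)+1) (i:ℕ) := by
      have e1 := DD_succ x₂ ((i:ℕ)+1) (i:ℕ) i.isLt
      have hmki : (⟨(i:ℕ), i.isLt⟩ : Fin n) = i := rfl
      have hin3 : (i:ℕ) ≤ n-3 := by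
        have := M'.isLt
        omega
      rw [hmki, if_pos (by rw [hx₂i, hzNv]; omega)] at e1
      have h2 := bruhat_DD hx₂v ((i:ℕ)+1) ((i:ℕ)+1)
      omega
    have hDu := bruhat_DD hux₂ ((i:ℕ)+1) (i:ℕ)
    by_contra hcon
    push_neg at hcon
    have hsubU : (Finset.univ.filter
        (fun q : Fin n => (i:ℕ) ≤ (q:ℕ) ∧ ((i:ℕ)+1 ≤ (u q:ℕ)))) ⊆
        (((Finset.univ.filter (fun q : Fin n => (i:ℕ) ≤ (q:ℕ))).erase ip1).erase i) := by
      intro q hq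
      rw [Finset.mem_filter] at hq
      rw [Finset.mem_erase, Finset.mem_erase, Finset.mem_filter]
      have hqi : q ≠ i := by
        intro hceq
        rw [hceq] at hq
        omega
      have hqip : q ≠ ip1 := by
        intro hceq
        rw [hceq] at hq
        omega
      exact ⟨hqi, hqip, Finset.mem_univ _, hq.2.1⟩
    have hmem1 : i ∈ (Finset.univ.filter (fun q : Fin n => (i:ℕ) ≤ (q:ℕ))).erase ip1 := by
      rw [Finset.mem_erase, Finset.mem_filter]
      exact ⟨by omega, Finset.mem_univ _, by omega⟩
    have hmem2 : ip1 ∈ Finset.univ.filter (fun q : Fin n => (i:ℕ) ≤ (q:ℕ)) := by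
      rw [Finset.mem_filter]
      exact ⟨Finset.mem_univ _, by omega⟩
    have hcardU := Finset.card_le_card hsubU
    rw [Finset.card_erase_of_mem hmem1, Finset.card_erase_of_mem hmem2,
      card_filter_val_ge (i:ℕ) (by omega)] at hcardU
    have hrfl : DD u ((i:ℕ)+1) (i:ℕ) = (Finset.univ.filter
      (fun q : Fin n => (i:ℕ) ≤ (q:ℕ) ∧ ((i:ℕ)+1 ≤ (u q:ℕ)))).card := rfl
    omega
  omega
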